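/- Let k ≥ 3 be a natural number, let β, γ, δ be real numbers, and define α : (0, ∞) → ℝ by α(r) = (β/((1 − k)(2 − k)))·r^(2 − k) + γ·r + δ. Then α satisfies the fourth-order equation 2r²·α⁽⁴⁾(r) + (3k + 4)·r·α⁽³⁾(r) + k(k + 2)·α''(r) = 0 for all r > 0. -/

import Mathlib

/-!
The function is `c * r ^ p` plus an affine function, with `p = 2 - k`. The affine part is killed by
every derivative of order at least two, and on `r ^ p` the operator acts as multiplication by
`p (p - 1) (2p + k - 2) (p + k - 2) r ^ (p - 2)`, whose last factor vanishes at `p = 2 - k`.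
-/

open Finset

section
variable {𝕜 : Type*} [NontriviallyNormedField 𝕜]

theorem contDiffAt_zpow_of_ne_zero {x : 𝕜} (hx : x ≠ 0) (m : ℤ) {n : WithTop ℕ∞} :
    ContDiffAt 𝕜 n (fun t : 𝕜 => t ^ m) x := by
  cases m with
  | ofNat k => simpa using (contDiff_id.pow k).contDiffAt
  | negSucc k =>
    simp only [zpow_negSucc]
    exact (contDiff_id.pow (k + 1)).contDiffAt.inv (pow_ne_zero _ hx)

theorem iteratedDeriv_affine_add_two (n : ℕ) (a b : 𝕜) :
    iteratedDeriv (n + 2) (fun t : 𝕜 => a * t + b) = 0 := by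
  have hderiv : deriv (fun t : 𝕜 => a * t + b) = fun _ => a := by
    ext t
    simp
  ext x
  rw [iteratedDeriv_succ', iteratedDeriv_succ', hderiv, deriv_const']
  simp

theorem iter_deriv_const_mul_zpow_add_affine {x : 𝕜} (hx : x ≠ 0) (c a b : 𝕜) (m : ℤ) (n : ℕ) :
    deriv^[n + 2] (fun t => c * t ^ m + a * t + b) x = c * deriv^[n + 2] (fun t => t ^ m) x := by
  have hzpow : ContDiffAt 𝕜 (n + 2) (fun t => c * t ^ m) x :=
    contDiffAt_const.mul (contDiffAt_zpow_of_ne_zero hx m)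
  have haffine : ContDiffAt 𝕜 (n + 2) (fun t : 𝕜 => a * t + b) x := by fun_prop
  simp_rw [← iteratedDeriv_eq_iterate, add_assoc]
  rw [iteratedDeriv_fun_add hzpow haffine, iteratedDeriv_affine_add_two, Pi.zero_apply, add_zero,
    iteratedDeriv_const_mul_field]

end

theorem radial_biharmonic_operator_zpow (k : ℝ) (p : ℤ) {r : ℝ} (hr : r ≠ 0) :
    2 * r ^ 2 * deriv^[4] (fun t : ℝ => t ^ p) r
      + (3 * k + 4) * r * deriv^[3] (fun t : ℝ => t ^ p) r
      + k * (k + 2) * deriv^[2] (fun t : ℝ => t ^ p) r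
      = p * (p - 1) * (2 * p + k - 2) * (p + k - 2) * r ^ (p - 2) := by
  have hshift (j : ℕ) : r ^ (p - 4 + j) = r ^ (p - 4) * r ^ j := by
    rw [zpow_add₀ hr, zpow_natCast]
  simp only [iter_deriv_zpow, prod_range_succ, prod_range_zero, Nat.cast_ofNat]
  rw [show p - 3 = p - 4 + (1 : ℕ) by push_cast; ring,
    show p - 2 = p - 4 + (2 : ℕ) by push_cast; ring, hshift, hshift]
  push_cast
  ring

theorem radial_biharmonic_rank_ge_three_general (k : ℕ) (β γ δ : ℝ) :
    ∀ r > (0 : ℝ),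
      2 * r ^ 2 * (deriv^[4] (fun t : ℝ =>
          β / ((1 - (k : ℝ)) * (2 - (k : ℝ))) * t ^ ((2 : ℤ) - (k : ℤ)) + γ * t + δ) r)
        + (3 * (k : ℝ) + 4) * r * (deriv^[3] (fun t : ℝ =>
          β / ((1 - (k : ℝ)) * (2 - (k : ℝ))) * t ^ ((2 : ℤ) - (k : ℤ)) + γ * t + δ) r)
        + (k : ℝ) * ((k : ℝ) + 2) * (deriv^[2] (fun t : ℝ =>
          β / ((1 - (k : ℝ)) * (2 - (k : ℝ))) * t ^ ((2 : ℤ) - (k : ℤ)) + γ * t + δ) r) = 0 := by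
  intro r hr
  simp only [iter_deriv_const_mul_zpow_add_affine hr.ne' _ _ _ _ 0,
    iter_deriv_const_mul_zpow_add_affine hr.ne' _ _ _ _ 1,
    iter_deriv_const_mul_zpow_add_affine hr.ne' _ _ _ _ 2]
  have h := radial_biharmonic_operator_zpow k (2 - k) hr.ne'
  push_cast at h
  linear_combination (β / ((1 - (k : ℝ)) * (2 - (k : ℝ)))) * h

/-- For `k ≥ 3`: the function `α(r) = (β/((1−k)(2−k)))·r^(2−k) + γr + δ` satisfies
`2r²α⁽⁴⁾ + (3k+4)rα⁽³⁾ + k(k+2)α'' = 0` for all `r > 0`. -/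
theorem radial_biharmonic_rank_ge_three (k : ℕ) (hk : 3 ≤ k) (β γ δ : ℝ) :
    ∀ r > (0 : ℝ),
      2 * r ^ 2 * (deriv^[4] (fun t : ℝ =>
          β / ((1 - (k : ℝ)) * (2 - (k : ℝ))) * t ^ ((2 : ℤ) - (k : ℤ)) + γ * t + δ) r)
        + (3 * (k : ℝ) + 4) * r * (deriv^[3] (fun t : ℝ =>
          β / ((1 - (k : ℝ)) * (2 - (k : ℝ))) * t ^ ((2 : ℤ) - (k : ℤ)) + γ * t + δ) r)
        + (k : ℝ) * ((k : ℝ) + 2) * (deriv^[2] (fun t : ℝ =>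
          β / ((1 - (k : ℝ)) * (2 - (k : ℝ))) * t ^ ((2 : ℤ) - (k : ℤ)) + γ * t + δ) r) = 0 :=
  radial_biharmonic_rank_ge_three_general k β γ δ
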